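/- Along any trajectory of the closed-loop SRB system, the storage function V = (1/2) vᵀ M_d v + (1/2) k_p ‖p_e‖² + 2 k_o (1 − η_e) is differentiable in time and its derivative satisfies the exact identity V̇(t) = − v(t)ᵀ D_d v(t) − k_r f(t) ( k_p ‖p_e(t)‖² + k_o ‖ε_e(t)‖² ) + v(t)ᵀ F_h(t) for all t. -/

import Mathlib

/-!
Differentiate the three terms of `V`: by symmetry of `M_d` the kinetic term contributes
`vᵀ M_d v̇`, and the admittance model replaces `M_d v̇` by `F_h + u_c − D_d v`. The power
`vᵀ u_c = k_p ṗ·p_e + k_o (R_e ω)·ε_e` of the coupling force cancels exactly the terms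
that `ṗ_e = −k_r f p_e − ṗ` and `η̇_e` contribute through `ṗ` and `R_e ω`; only the god-object
damping `−k_r f (k_p ‖p_e‖² + k_o ‖ε_e‖²)` survives.
-/

open Matrix

section
variable {𝕜 ι : Type*} [NontriviallyNormedField 𝕜] [Fintype ι] {t : 𝕜}

theorem HasDerivAt.dotProduct {u w : 𝕜 → ι → 𝕜} {u' w' : ι → 𝕜}
    (hu : HasDerivAt u u' t) (hw : HasDerivAt w w' t) :
    HasDerivAt (fun s => u s ⬝ᵥ w s) (u' ⬝ᵥ w t + u t ⬝ᵥ w') t := by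
  have h := HasDerivAt.fun_sum (u := Finset.univ) fun i _ =>
    (hasDerivAt_pi.mp hu i).fun_mul (hasDerivAt_pi.mp hw i)
  rw [Finset.sum_add_distrib] at h
  exact h

theorem HasDerivAt.mulVec {κ : Type*} (A : Matrix κ ι 𝕜) {u : 𝕜 → ι → 𝕜} {u' : ι → 𝕜}
    (hu : HasDerivAt u u' t) : HasDerivAt (fun s => A *ᵥ u s) (A *ᵥ u') t :=
  hasDerivAt_pi.mpr fun i =>
    HasDerivAt.fun_sum fun j _ => (hasDerivAt_pi.mp hu j).const_mul (A i j)

theorem HasDerivAt.dotProduct_self {u : 𝕜 → ι → 𝕜} {u' : ι → 𝕜}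
    (hu : HasDerivAt u u' t) :
    HasDerivAt (fun s => u s ⬝ᵥ u s) (2 * (u t ⬝ᵥ u')) t := by
  convert hu.dotProduct hu using 1
  rw [dotProduct_comm u', two_mul]

theorem HasDerivAt.dotProduct_mulVec_self {M : Matrix ι ι 𝕜} (hM : M.IsSymm)
    {u : 𝕜 → ι → 𝕜} {u' : ι → 𝕜} (hu : HasDerivAt u u' t) :
    HasDerivAt (fun s => u s ⬝ᵥ M *ᵥ u s) (2 * (u t ⬝ᵥ M *ᵥ u')) t := by
  convert hu.dotProduct (hu.mulVec M) using 1
  rw [dotProduct_mulVec u', ← vecMul_transpose, hM.eq, dotProduct_comm, two_mul]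
end

theorem Fin.append_dotProduct_append {R : Type*} [NonUnitalNonAssocSemiring R] {m n : ℕ}
    (a c : Fin m → R) (b d : Fin n → R) :
    Fin.append a b ⬝ᵥ Fin.append c d = a ⬝ᵥ c + b ⬝ᵥ d := by
  simp only [dotProduct, Fin.sum_univ_add, Fin.append_left, Fin.append_right]

theorem storage_function_derivative_general
    (Md Dd : Matrix (Fin 6) (Fin 6) ℝ) (kp ko kr : ℝ) (f : ℝ → ℝ)
    (Fh : ℝ → Fin 6 → ℝ)
    (p pg ω εe pdot : ℝ → Fin 3 → ℝ) (ηe : ℝ → ℝ)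
    (Re : ℝ → Matrix (Fin 3) (Fin 3) ℝ)
    (v vdot : ℝ → Fin 6 → ℝ)
    (hMd : Md.PosDef)
    -- `v = (ṗ, ω)`:
    (hp : ∀ t : ℝ, HasDerivAt p (pdot t) t)
    (hv : ∀ t : ℝ, v t = Fin.append (pdot t) (ω t))
    (hvdot : ∀ t : ℝ, HasDerivAt v (vdot t) t)
    -- (i) admittance model with `u_c = (k_p p_e, k_o R_eᵀ ε_e)`:
    (hadm : ∀ t : ℝ,
      Md.mulVec (vdot t) + Dd.mulVec (v t) =
        Fh t + Fin.append (kp • (pg t - p t)) (ko • (Re t)ᵀ.mulVec (εe t)))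
    -- (ii) god-object dynamics:
    (hpg : ∀ t : ℝ, HasDerivAt pg ((-(kr * f t)) • (pg t - p t)) t)
    -- (iii) quaternion-error kinematics, with `ω_g = −k_r f ε_e`:
    (hηe : ∀ t : ℝ, HasDerivAt ηe
      (-(1 / 2) * (εe t ⬝ᵥ ((-(kr * f t)) • εe t - (Re t).mulVec (ω t)))) t) :
    ∀ t : ℝ,
      HasDerivAt (fun s : ℝ =>
          (1 / 2) * (v s ⬝ᵥ Md.mulVec (v s)) +
            (1 / 2) * kp * ((pg s - p s) ⬝ᵥ (pg s - p s)) +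
            2 * ko * (1 - ηe s))
        (-(v t ⬝ᵥ Dd.mulVec (v t)) -
            kr * f t * (kp * ((pg t - p t) ⬝ᵥ (pg t - p t)) +
              ko * (εe t ⬝ᵥ εe t)) +
          v t ⬝ᵥ Fh t) t := by
  intro t
  have hMd_symm : Md.IsSymm := isHermitian_iff_isSymm.mp hMd.isHermitian
  have hV := ((((hvdot t).dotProduct_mulVec_self hMd_symm).const_mul (1 / 2)).add
    (((hpg t).sub (hp t)).dotProduct_self.const_mul ((1 / 2) * kp))).add
    (((hηe t).const_sub 1).const_mul (2 * ko))
  refine hV.congr_deriv ?_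
  rw [Pi.sub_apply, eq_sub_of_add_eq (hadm t)]
  generalize pg t - p t = pe
  have hcoupling_power : v t ⬝ᵥ Fin.append (kp • pe) (ko • (Re t)ᵀ *ᵥ εe t) =
      kp * (pe ⬝ᵥ pdot t) + ko * (εe t ⬝ᵥ Re t *ᵥ ω t) := by
    rw [hv t, Fin.append_dotProduct_append, dotProduct_smul, dotProduct_smul,
      dotProduct_mulVec, vecMul_transpose, dotProduct_comm (pdot t),
      dotProduct_comm (Re t *ᵥ ω t), smul_eq_mul, smul_eq_mul]
  simp only [dotProduct_sub, dotProduct_add, hcoupling_power, dotProduct_smul, smul_eq_mul]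
  ring

/-- along any trajectory of the closed-loop SRB system
(admittance model `M_d v̇ + D_d v = F_h + u_c` with
`u_c = (k_p p_e, k_o R_eᵀ ε_e)`, god-object dynamics `ṗ_g = −k_r f p_e`,
`ω_g = −k_r f ε_e`, and quaternion-error kinematics
`η̇_e = −(1/2) ε_eᵀ (ω_g − R_e ω)`), the storage function
`V = (1/2) vᵀ M_d v + (1/2) k_p ‖p_e‖² + 2 k_o (1 − η_e)` is differentiable
in time, with
`V̇(t) = −vᵀ D_d v − k_r f (k_p ‖p_e‖² + k_o ‖ε_e‖²) + vᵀ F_h` for all `t`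
(squared Euclidean norms written via dot products, `v = (ṗ, ω) ∈ ℝ⁶`). -/
theorem storage_function_derivative
    (Md Dd : Matrix (Fin 6) (Fin 6) ℝ) (kp ko kr : ℝ) (f : ℝ → ℝ)
    (Fh : ℝ → Fin 6 → ℝ)
    (p pg ω εe pdot : ℝ → Fin 3 → ℝ) (ηe : ℝ → ℝ)
    (Re : ℝ → Matrix (Fin 3) (Fin 3) ℝ)
    (v vdot : ℝ → Fin 6 → ℝ)
    (hMd : Md.PosDef) (hDd : Dd.PosDef)
    (hkp : 0 < kp) (hko : 0 < ko) (hkr : 0 < kr)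
    (hf : ∀ t : ℝ, f t ∈ Set.Icc (0:ℝ) 1)
    (hRe : ∀ t : ℝ, (Re t)ᵀ * Re t = 1)
    (hRedet : ∀ t : ℝ, (Re t).det = 1)
    -- `v = (ṗ, ω)`:
    (hp : ∀ t : ℝ, HasDerivAt p (pdot t) t)
    (hv : ∀ t : ℝ, v t = Fin.append (pdot t) (ω t))
    (hvdot : ∀ t : ℝ, HasDerivAt v (vdot t) t)
    -- (i) admittance model with `u_c = (k_p p_e, k_o R_eᵀ ε_e)`:
    (hadm : ∀ t : ℝ,
      Md.mulVec (vdot t) + Dd.mulVec (v t) =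
        Fh t + Fin.append (kp • (pg t - p t)) (ko • (Re t)ᵀ.mulVec (εe t)))
    -- (ii) god-object dynamics:
    (hpg : ∀ t : ℝ, HasDerivAt pg ((-(kr * f t)) • (pg t - p t)) t)
    -- (iii) quaternion-error kinematics, with `ω_g = −k_r f ε_e`:
    (hηe : ∀ t : ℝ, HasDerivAt ηe
      (-(1 / 2) * (εe t ⬝ᵥ ((-(kr * f t)) • εe t - (Re t).mulVec (ω t)))) t) :
    ∀ t : ℝ,
      HasDerivAt (fun s : ℝ =>
          (1 / 2) * (v s ⬝ᵥ Md.mulVec (v s)) +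
            (1 / 2) * kp * ((pg s - p s) ⬝ᵥ (pg s - p s)) +
            2 * ko * (1 - ηe s))
        (-(v t ⬝ᵥ Dd.mulVec (v t)) -
            kr * f t * (kp * ((pg t - p t) ⬝ᵥ (pg t - p t)) +
              ko * (εe t ⬝ᵥ εe t)) +
          v t ⬝ᵥ Fh t) t :=
  storage_function_derivative_general Md Dd kp ko kr f Fh p pg ω εe pdot ηe Re v vdot hMd hp hv
    hvdot hadm hpg hηe
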